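/- arXiv:hep-th/0302120 — 5 statements merged into one kernel-verified Lean document; each statement's English description precedes it below -/
import Mathlib

section
/- Set A(a,b) = (1 − a²)(1 − b²). For c ∈ [−1, 1], the function (a,b) ↦ A(a,b) / ((1 − c·A(a,b))² · √((2 − a²)(2 − b²))) is Lebesgue integrable on (0,1)² if and only if c < 1. In particular the integral converges for c = cos θ with θ ∈ (0, 2π) and diverges at θ = 0. -/
/-!
For `c < 1` the integrand is bounded on the square: `0 ≤ A ≤ 1` gives `1 - cA ≥ min 1 (1 - c) > 0`,
and the square root is at least `1`. For `c = 1` the factor `1 - A = a² + b² - a²b²` vanishes at the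
corner `(0, 0)`: for `0 < b < a < 1/4` the integrand is at least `9 / (128 a⁴)`, so integrating out
`b ∈ (0, a)` leaves a multiple of `a⁻³`, which is not integrable at `0`; by Fubini neither is the
integrand.
-/

open Real MeasureTheory Set

noncomputable def partitionIntegrand (c : ℝ) (p : ℝ × ℝ) : ℝ :=
  (1 - p.1^2) * (1 - p.2^2) /
    ((1 - c * ((1 - p.1^2) * (1 - p.2^2)))^2 * Real.sqrt ((2 - p.1^2) * (2 - p.2^2)))

theorem not_integrableOn_prod_of_le_integral_norm {α β E : Type*} [MeasurableSpace α]
    [MeasurableSpace β] [NormedAddCommGroup E] {μ : Measure α} {ν : Measure β} [SFinite μ]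
    [SFinite ν] {f : α × β → E} {g : α → ℝ} {s : Set α} {t : Set β} (hs : MeasurableSet s)
    (hg : ¬ IntegrableOn g s μ) (hgm : AEStronglyMeasurable g (μ.restrict s))
    (hle : ∀ a ∈ s, IntegrableOn (fun b ↦ f (a, b)) t ν → ‖g a‖ ≤ ∫ b in t, ‖f (a, b)‖ ∂ν) :
    ¬ IntegrableOn f (s ×ˢ t) (μ.prod ν) := by
  intro hf
  rw [IntegrableOn, ← Measure.prod_restrict] at hf
  refine hg (hf.integral_norm_prod_left.mono' hgm ?_)
  filter_upwards [ae_restrict_mem hs, hf.prod_right_ae] with a ha hfiber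
  exact hle a ha hfiber

theorem min_one_one_sub_le_one_sub_mul {c A : ℝ} (hA₀ : 0 ≤ A) (hA₁ : A ≤ 1) :
    min 1 (1 - c) ≤ 1 - c * A := by
  rcases le_or_gt c 0 with hc | hc
  · exact (min_le_left _ _).trans (by nlinarith)
  · exact (min_le_right _ _).trans (by nlinarith)

theorem norm_partitionIntegrand_le {c a b : ℝ} (hc : c < 1) (ha : a^2 ≤ 1) (hb : b^2 ≤ 1) :
    ‖partitionIntegrand c (a, b)‖ ≤ 1 / min 1 (1 - c) ^ 2 := by
  have hm : 0 < min 1 (1 - c) := lt_min one_pos (by linarith)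
  have hA₀ : 0 ≤ (1 - a^2) * (1 - b^2) := mul_nonneg (by linarith) (by linarith)
  have hA₁ : (1 - a^2) * (1 - b^2) ≤ 1 := by nlinarith
  have hsqrt : 1 ≤ Real.sqrt ((2 - a^2) * (2 - b^2)) :=
    Real.one_le_sqrt.2 (by nlinarith)
  have hden : min 1 (1 - c) ^ 2 ≤ (1 - c * ((1 - a^2) * (1 - b^2)))^2 *
      Real.sqrt ((2 - a^2) * (2 - b^2)) := by
    calc min 1 (1 - c) ^ 2 = min 1 (1 - c) ^ 2 * 1 := (mul_one _).symm
      _ ≤ _ := by gcongr; exact min_one_one_sub_le_one_sub_mul hA₀ hA₁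
  rw [partitionIntegrand, Real.norm_eq_abs,
    abs_of_nonneg (div_nonneg hA₀ ((by positivity : (0:ℝ) ≤ _).trans hden))]
  exact div_le_div₀ zero_le_one hA₁ (by positivity) hden

theorem integrableOn_partitionIntegrand {c : ℝ} (hc : c < 1) :
    IntegrableOn (partitionIntegrand c) (Ioo 0 1 ×ˢ Ioo 0 1) := by
  refine Measure.integrableOn_of_bounded (M := 1 / min 1 (1 - c) ^ 2) ?_
    (by unfold partitionIntegrand; fun_prop : Measurable _).aestronglyMeasurable ?_
  · simp [Measure.volume_eq_prod, Measure.prod_prod, Real.volume_Ioo]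
  · filter_upwards [ae_restrict_mem (measurableSet_Ioo.prod measurableSet_Ioo)]
      with ⟨a, b⟩ ⟨⟨ha₀, ha₁⟩, hb₀, hb₁⟩
    exact norm_partitionIntegrand_le hc (by nlinarith) (by nlinarith)

theorem div_le_partitionIntegrand_one {a b : ℝ} (hb₀ : 0 < b) (hba : b < a) (ha : a < 1/4) :
    9 / (128 * a^4) ≤ partitionIntegrand 1 (a, b) := by
  have hA : 9/16 ≤ (1 - a^2) * (1 - b^2) := by nlinarith
  have hgap₀ : 0 < 1 - 1 * ((1 - a^2) * (1 - b^2)) := by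
    nlinarith [mul_pos hb₀ hb₀, mul_nonneg (sq_nonneg a) (by nlinarith : (0:ℝ) ≤ 1 - b^2)]
  have hgap₁ : 1 - 1 * ((1 - a^2) * (1 - b^2)) ≤ 2 * a^2 := by nlinarith [sq_nonneg (a * b)]
  have hsqrt : Real.sqrt ((2 - a^2) * (2 - b^2)) ≤ 2 :=
    (Real.sqrt_le_left (by norm_num)).2 (by nlinarith)
  have hden : (1 - 1 * ((1 - a^2) * (1 - b^2)))^2 * Real.sqrt ((2 - a^2) * (2 - b^2)) ≤
      8 * a^4 :=
    calc _ ≤ (2 * a^2)^2 * 2 := by gcongr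
      _ = 8 * a^4 := by ring
  calc 9 / (128 * a^4) = (9/16) / (8 * a^4) := by ring
    _ ≤ _ := div_le_div₀ (by linarith) hA
        (mul_pos (pow_pos hgap₀ 2) (Real.sqrt_pos.2 (by nlinarith))) hden

theorem mul_rpow_neg_three_le_integral_norm_partitionIntegrand_one {a : ℝ} (ha₀ : 0 < a)
    (ha : a < 1/4) (hfiber : IntegrableOn (fun b ↦ partitionIntegrand 1 (a, b)) (Ioo 0 (1/2))) :
    9/128 * a ^ (-3 : ℝ) ≤ ∫ b in Ioo 0 (1/2), ‖partitionIntegrand 1 (a, b)‖ := by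
  have hsub : Ioo 0 a ⊆ Ioo (0 : ℝ) (1/2) := Ioo_subset_Ioo_right (by linarith)
  calc 9/128 * a ^ (-3 : ℝ) = ∫ _ in Ioo 0 a, 9 / (128 * a^4) := by
        rw [setIntegral_const, Real.volume_real_Ioo_of_le ha₀.le, sub_zero, Real.rpow_neg ha₀.le,
          Real.rpow_ofNat, smul_eq_mul]
        field_simp
    _ ≤ ∫ b in Ioo 0 a, ‖partitionIntegrand 1 (a, b)‖ :=
        setIntegral_mono_on (integrableOn_const (by simp [Real.volume_Ioo]))
          (hfiber.mono_set hsub).norm measurableSet_Ioo fun b ⟨hb₀, hba⟩ ↦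
            (div_le_partitionIntegrand_one hb₀ hba ha).trans (le_abs_self _)
    _ ≤ ∫ b in Ioo 0 (1/2), ‖partitionIntegrand 1 (a, b)‖ :=
        setIntegral_mono_set hfiber.norm (ae_of_all _ fun _ ↦ norm_nonneg _)
          hsub.eventuallyLE

theorem not_integrableOn_partitionIntegrand_one :
    ¬ IntegrableOn (partitionIntegrand 1) (Ioo 0 1 ×ˢ Ioo 0 1) := by
  have hsing : ¬ IntegrableOn (fun a : ℝ ↦ 9/128 * a ^ (-3 : ℝ)) (Ioo 0 (1/4)) := by
    rw [IntegrableOn, integrable_const_mul_iff (by norm_num), ← IntegrableOn,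
      intervalIntegral.integrableOn_Ioo_rpow_iff (by norm_num)]
    norm_num
  refine fun hf ↦ not_integrableOn_prod_of_le_integral_norm measurableSet_Ioo hsing
    (by fun_prop) (fun a ⟨ha₀, ha⟩ hfiber ↦ ?_)
    (hf.mono_set (prod_mono (Ioo_subset_Ioo_right (by norm_num : (1/4 : ℝ) ≤ 1))
      (Ioo_subset_Ioo_right (by norm_num : (1/2 : ℝ) ≤ 1))))
  rw [Real.norm_of_nonneg (by positivity)]
  exact mul_rpow_neg_three_le_integral_norm_partitionIntegrand_one ha₀ ha hfiber

/-- Convergence of the fixed-angle partition function integral of quantum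
U(1)-Yang-Mills theory on `ℤ₂ × ℤ₂`: with `A(a,b) = (1−a²)(1−b²)` and
`c ∈ [−1,1]`, the integrand `A/((1−cA)²√((2−a²)(2−b²)))` is Lebesgue integrable
on `(0,1)²` if and only if `c < 1` (convergent for `c = cos θ`, `θ ≠ 0`,
divergent at `θ = 0`). -/
theorem stmt_3 (c : ℝ) (hc : c ∈ Set.Icc (-1 : ℝ) 1) :
    IntegrableOn
      (fun p : ℝ × ℝ =>
        (1 - p.1^2) * (1 - p.2^2) /
          ((1 - c * ((1 - p.1^2) * (1 - p.2^2)))^2 *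
            Real.sqrt ((2 - p.1^2) * (2 - p.2^2))))
      ((Set.Ioo (0:ℝ) 1) ×ˢ (Set.Ioo (0:ℝ) 1))
    ↔ c < 1 := by
  refine ⟨fun h ↦ hc.2.lt_of_ne ?_, integrableOn_partitionIntegrand⟩
  rintro rfl
  exact not_integrableOn_partitionIntegrand_one h
end

section
/- Set A(a,b) = (1 − a²)(1 − b²). Then ∫_{(0,1)²} A(a,b)² / √((2 − a²)(2 − b²)) da db = π²/64, and consequently the ratio ((1/2)·∫_{(0,1)²} A²/√((2−a²)(2−b²)) da db) / (∫_{(0,1)²} A/√((2−a²)(2−b²)) da db) equals π²/32. -/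
/-!
The weight `1 / √((2 - a²)(2 - b²))` factorises, so each double integral is the square of a
one-variable integral `∫₀¹ (1 - x²)ⁿ / √(2 - x²) dx`. These have elementary primitives built from
`x ↦ p(x) √(2 - x²)` for polynomials `p` and from `arctan (x / √(2 - x²))`, a primitive of
`1 / √(2 - x²)` whose value at `1` is `arctan 1 = π / 4`. This gives `1/2` for `n = 1` and
`π / 8` for `n = 2`, whence the double integrals `1/4` and `π² / 64`.
-/

open Real MeasureTheory Set

section Primitives

variable {c x : ℝ}

theorem hasDerivAt_sqrt_sub_sq (h : x ^ 2 < c) :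
    HasDerivAt (fun y => √(c - y ^ 2)) (-x / √(c - x ^ 2)) x := by
  refine ((hasDerivAt_pow 2 x).const_sub c).sqrt (by linarith) |>.congr_deriv ?_
  field_simp
  ring

theorem HasDerivAt.mul_sqrt_sub_sq {p : ℝ → ℝ} {p' : ℝ} (hp : HasDerivAt p p' x)
    (h : x ^ 2 < c) :
    HasDerivAt (fun y => p y * √(c - y ^ 2))
      ((p' * (c - x ^ 2) - x * p x) / √(c - x ^ 2)) x := by
  have hsq : √(c - x ^ 2) ^ 2 = c - x ^ 2 := sq_sqrt (by linarith)
  refine (hp.fun_mul (hasDerivAt_sqrt_sub_sq h)).congr_deriv ?_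
  field_simp
  rw [hsq]
  ring

theorem hasDerivAt_arctan_div_sqrt_sub_sq (h : x ^ 2 < c) :
    HasDerivAt (fun y => arctan (y / √(c - y ^ 2))) (1 / √(c - x ^ 2)) x := by
  have hsq : √(c - x ^ 2) ^ 2 = c - x ^ 2 := sq_sqrt (by linarith)
  have hpos : 0 < √(c - x ^ 2) := sqrt_pos.2 (by linarith)
  have hquot := (hasDerivAt_id' x).fun_div (hasDerivAt_sqrt_sub_sq h) hpos.ne'
  refine hquot.arctan.congr_deriv ?_
  field_simp
  rw [hsq]
  ring

end Primitives

theorem setIntegral_Ioo_eq_sub_of_hasDerivAt {f f' : ℝ → ℝ} {a b : ℝ} (hab : a ≤ b)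
    (hderiv : ∀ x ∈ Icc a b, HasDerivAt f (f' x) x) (hcont : ContinuousOn f' (Icc a b)) :
    ∫ x in Ioo a b, f' x = f b - f a := by
  rw [← integral_Ioc_eq_integral_Ioo, ← intervalIntegral.integral_of_le hab]
  rw [← uIcc_of_le hab] at hderiv hcont
  exact intervalIntegral.integral_eq_sub_of_hasDerivAt hderiv hcont.intervalIntegrable

theorem sq_lt_two_of_mem_Icc {x : ℝ} (hx : x ∈ Icc (0 : ℝ) 1) : x ^ 2 < 2 := by
  nlinarith [hx.1, hx.2]

theorem continuousOn_div_sqrt_two_sub_sq {f : ℝ → ℝ} (hf : Continuous f) :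
    ContinuousOn (fun x => f x / √(2 - x ^ 2)) (Icc 0 1) :=
  hf.continuousOn.div (by fun_prop) fun x hx =>
    (sqrt_pos.2 (sub_pos.2 (sq_lt_two_of_mem_Icc hx))).ne'

theorem integral_one_sub_sq_div_sqrt_two_sub_sq :
    ∫ x in Ioo (0 : ℝ) 1, (1 - x ^ 2) / √(2 - x ^ 2) = 1 / 2 := by
  have hderiv (x : ℝ) (hx : x ∈ Icc (0 : ℝ) 1) :
      HasDerivAt (fun y => y * √(2 - y ^ 2) / 2) ((1 - x ^ 2) / √(2 - x ^ 2)) x := by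
    refine ((hasDerivAt_id' x).mul_sqrt_sub_sq (sq_lt_two_of_mem_Icc hx)).div_const 2
      |>.congr_deriv ?_
    ring
  rw [setIntegral_Ioo_eq_sub_of_hasDerivAt zero_le_one hderiv
    (continuousOn_div_sqrt_two_sub_sq (by fun_prop))]
  norm_num

theorem integral_one_sub_sq_sq_div_sqrt_two_sub_sq :
    ∫ x in Ioo (0 : ℝ) 1, (1 - x ^ 2) ^ 2 / √(2 - x ^ 2) = π / 8 := by
  have hderiv (x : ℝ) (hx : x ∈ Icc (0 : ℝ) 1) :
      HasDerivAt (fun y => arctan (y / √(2 - y ^ 2)) / 2 + y * (1 - y ^ 2) * √(2 - y ^ 2) / 4)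
        ((1 - x ^ 2) ^ 2 / √(2 - x ^ 2)) x := by
    have hx2 := sq_lt_two_of_mem_Icc hx
    have hpoly : HasDerivAt (fun y : ℝ => y * (1 - y ^ 2)) (1 - 3 * x ^ 2) x := by
      refine (hasDerivAt_id' x).fun_mul ((hasDerivAt_pow 2 x).const_sub 1) |>.congr_deriv ?_
      push_cast
      ring
    refine ((hasDerivAt_arctan_div_sqrt_sub_sq hx2).div_const 2).add
      ((hpoly.mul_sqrt_sub_sq hx2).div_const 4) |>.congr_deriv ?_
    ring
  rw [setIntegral_Ioo_eq_sub_of_hasDerivAt zero_le_one hderiv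
    (continuousOn_div_sqrt_two_sub_sq (by fun_prop))]
  norm_num [arctan_one]
  ring

theorem setIntegral_prod_mul_div_sqrt_mul {α β : Type*} [MeasurableSpace α] [MeasurableSpace β]
    {μ : Measure α} {ν : Measure β} [SFinite μ] [SFinite ν] {s : Set α} {t : Set β}
    (hs : MeasurableSet s) (ht : MeasurableSet t) (f u : α → ℝ) (g v : β → ℝ)
    (hu : ∀ x ∈ s, 0 ≤ u x) :
    ∫ p in s ×ˢ t, f p.1 * g p.2 / √(u p.1 * v p.2) ∂μ.prod ν
      = (∫ x in s, f x / √(u x) ∂μ) * ∫ y in t, g y / √(v y) ∂ν := by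
  rw [← setIntegral_prod_mul]
  refine setIntegral_congr_fun (hs.prod ht) fun p hp => ?_
  rw [sqrt_mul (hu _ hp.1), div_mul_div_comm]

theorem integral_unitSquare_pow_div_sqrt (n : ℕ) :
    ∫ p in Ioo (0 : ℝ) 1 ×ˢ Ioo (0 : ℝ) 1,
        ((1 - p.1 ^ 2) * (1 - p.2 ^ 2)) ^ n / √((2 - p.1 ^ 2) * (2 - p.2 ^ 2))
      = (∫ x in Ioo (0 : ℝ) 1, (1 - x ^ 2) ^ n / √(2 - x ^ 2)) ^ 2 := by
  simp_rw [mul_pow]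
  rw [Measure.volume_eq_prod, setIntegral_prod_mul_div_sqrt_mul measurableSet_Ioo
    measurableSet_Ioo (fun x => (1 - x ^ 2) ^ n) (fun x => 2 - x ^ 2) (fun y => (1 - y ^ 2) ^ n)
    (fun y => 2 - y ^ 2) fun x hx => by nlinarith [hx.1, hx.2], sq]

/-- The normalised vacuum expectation value of the scale Wilson loop
`λ₁λ₂λ₃λ₄` at `θ = π/2`, `α = 1` in quantum U(1)-Yang-Mills theory on
`ℤ₂ × ℤ₂`: with `A(a,b) = (1−a²)(1−b²)`, one has
`∫_{(0,1)²} A²/√((2−a²)(2−b²)) = π²/64` and hence the ratio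
`((1/2)∫A²/√(⋯)) / (∫A/√(⋯)) = π²/32`. -/
theorem stmt_5 :
    (∫ p in (Set.Ioo (0:ℝ) 1) ×ˢ (Set.Ioo (0:ℝ) 1),
        ((1 - p.1^2) * (1 - p.2^2))^2 / Real.sqrt ((2 - p.1^2) * (2 - p.2^2)))
      = π^2/64
    ∧ ((1/2) * ∫ p in (Set.Ioo (0:ℝ) 1) ×ˢ (Set.Ioo (0:ℝ) 1),
          ((1 - p.1^2) * (1 - p.2^2))^2 / Real.sqrt ((2 - p.1^2) * (2 - p.2^2)))
        / (∫ p in (Set.Ioo (0:ℝ) 1) ×ˢ (Set.Ioo (0:ℝ) 1),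
            (1 - p.1^2) * (1 - p.2^2) / Real.sqrt ((2 - p.1^2) * (2 - p.2^2)))
      = π^2/32 := by
  have hA := integral_unitSquare_pow_div_sqrt 2
  have hB := integral_unitSquare_pow_div_sqrt 1
  simp only [pow_one] at hB
  rw [integral_one_sub_sq_sq_div_sqrt_two_sub_sq] at hA
  rw [integral_one_sub_sq_div_sqrt_two_sub_sq] at hB
  rw [hA, hB]
  constructor <;> ring
end

section
/- Set A(a,b) = (1 − a²)(1 − b²). The function (a,b) ↦ A(a,b) / ((1 − A(a,b)²)^{3/2} · √((2 − a²)(2 − b²))) is not Lebesgue integrable on (0,1)². -/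
/-!
Near the corner `a = b = 0` we have `A → 1` and `1 - A² ≤ 2(a + b)²`, so the
integrand is bounded below by a multiple of `(a + b)⁻³`. Integrating `(a + b)⁻³` in `b` over
`(0, r)` leaves at least `(8a²)⁻¹`, and `a⁻²` is not integrable at `0`.
-/

open Real MeasureTheory Set

theorem rpow_three_halves_le_pow_three {y t : ℝ} (hy : 0 ≤ y) (ht : 0 ≤ t) (h : y ≤ t ^ 2) :
    y ^ (3 / 2 : ℝ) ≤ t ^ 3 :=
  calc y ^ (3 / 2 : ℝ) ≤ (t ^ 2) ^ (3 / 2 : ℝ) := rpow_le_rpow hy h (by norm_num)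
    _ = t ^ 3 := by
      rw [← rpow_natCast t 2, ← rpow_mul ht]
      norm_num

noncomputable def partitionDensity (a b : ℝ) : ℝ :=
  (1 - a ^ 2) * (1 - b ^ 2) /
    ((1 - ((1 - a ^ 2) * (1 - b ^ 2)) ^ 2) ^ (3 / 2 : ℝ) * √((2 - a ^ 2) * (2 - b ^ 2)))

theorem inv_twelve_mul_add_pow_three_le_partitionDensity {a b : ℝ}
    (ha : a ∈ Ioo (0 : ℝ) (1 / 2)) (hb : b ∈ Ioo (0 : ℝ) (1 / 2)) :
    (12 * (a + b) ^ 3)⁻¹ ≤ partitionDensity a b := by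
  obtain ⟨ha0, ha1⟩ := ha
  obtain ⟨hb0, hb1⟩ := hb
  set A := (1 - a ^ 2) * (1 - b ^ 2) with hA
  have hA_ge : 9 / 16 ≤ A := by
    have : (3 / 4 : ℝ) * (3 / 4) ≤ A :=
      mul_le_mul (by nlinarith) (by nlinarith) (by norm_num) (by nlinarith)
    linarith
  have hA_lt : A < 1 := by
    have : 0 < a ^ 2 * (1 - b ^ 2) := mul_pos (by positivity) (by nlinarith)
    nlinarith [sq_nonneg b]
  have hgap_pos : 0 < 1 - A ^ 2 := by nlinarith
  have hgap_le : 1 - A ^ 2 ≤ (3 / 2 * (a + b)) ^ 2 :=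
    calc 1 - A ^ 2 = (1 - A) * (1 + A) := by ring
      _ ≤ (1 - A) * 2 := by gcongr; linarith
      _ = 2 * (a ^ 2 + b ^ 2 - a ^ 2 * b ^ 2) := by rw [hA]; ring
      _ ≤ (3 / 2 * (a + b)) ^ 2 := by nlinarith [mul_pos ha0 hb0]
  have hpow : (1 - A ^ 2) ^ (3 / 2 : ℝ) ≤ (3 / 2 * (a + b)) ^ 3 :=
    rpow_three_halves_le_pow_three hgap_pos.le (by positivity) hgap_le
  have hsqrt : √((2 - a ^ 2) * (2 - b ^ 2)) ≤ 2 := by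
    rw [sqrt_le_left (by norm_num)]
    nlinarith
  have hden_pos : 0 < (1 - A ^ 2) ^ (3 / 2 : ℝ) * √((2 - a ^ 2) * (2 - b ^ 2)) :=
    mul_pos (rpow_pos_of_pos hgap_pos _) (sqrt_pos.2 (by nlinarith))
  calc (12 * (a + b) ^ 3)⁻¹ = (9 / 16) / ((3 / 2 * (a + b)) ^ 3 * 2) := by
        field_simp; ring
    _ ≤ A / ((1 - A ^ 2) ^ (3 / 2 : ℝ) * √((2 - a ^ 2) * (2 - b ^ 2))) :=
        div_le_div₀ (by linarith) hA_ge hden_pos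
          (mul_le_mul hpow hsqrt (sqrt_nonneg _) (by positivity))

theorem inv_eight_mul_sq_le_setIntegral_inv_add_pow_three {a r : ℝ} (ha : 0 < a) (har : a ≤ r) :
    (8 * a ^ 2)⁻¹ ≤ ∫ b in Ioo 0 r, ((a + b) ^ 3)⁻¹ := by
  have hint : IntegrableOn (fun b => ((a + b) ^ 3)⁻¹) (Ioo 0 r) := by
    refine (ContinuousOn.integrableOn_Icc ?_).mono_set Ioo_subset_Icc_self
    exact ContinuousOn.inv₀ (by fun_prop) fun b hb => by have := hb.1; positivity
  calc (8 * a ^ 2)⁻¹ = ((2 * a) ^ 3)⁻¹ * volume.real (Ioo 0 a) := by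
        rw [Real.volume_real_Ioo_of_le ha.le]; field_simp; ring
    _ ≤ ∫ b in Ioo 0 a, ((a + b) ^ 3)⁻¹ := by
        refine setIntegral_ge_of_const_le_real measurableSet_Ioo (by simp) (fun b hb => ?_)
          (hint.mono_set (Ioo_subset_Ioo_right har))
        have hb0 := hb.1
        gcongr
        linarith [hb.2]
    _ ≤ ∫ b in Ioo 0 r, ((a + b) ^ 3)⁻¹ :=
        setIntegral_mono_set hint
          (ae_restrict_of_forall_mem measurableSet_Ioo fun b hb => by have := hb.1; positivity)
          (Ioo_subset_Ioo_right har).eventuallyLE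

theorem not_integrableOn_inv_add_pow_three {r : ℝ} (hr : 0 < r) :
    ¬ IntegrableOn (fun p : ℝ × ℝ => ((p.1 + p.2) ^ 3)⁻¹) (Ioo 0 r ×ˢ Ioo 0 r) := by
  intro h
  replace h : Integrable (fun p : ℝ × ℝ => ((p.1 + p.2) ^ 3)⁻¹)
      ((volume.restrict (Ioo 0 r)).prod (volume.restrict (Ioo 0 r))) := by
    rwa [Measure.prod_restrict]
  have hmarginal : IntegrableOn (fun a => ∫ b in Ioo 0 r, ((a + b) ^ 3)⁻¹) (Ioo 0 r) :=
    h.integral_prod_left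
  have hinv_sq : IntegrableOn (fun a : ℝ => a ^ (-2 : ℝ)) (Ioo 0 r) := by
    refine (hmarginal.const_mul 8).mono' (by fun_prop) ?_
    refine ae_restrict_of_forall_mem measurableSet_Ioo fun a ha => ?_
    have hbound := inv_eight_mul_sq_le_setIntegral_inv_add_pow_three ha.1 ha.2.le
    rw [mul_inv] at hbound
    rw [norm_of_nonneg (rpow_nonneg ha.1.le _), rpow_neg ha.1.le, rpow_two]
    linarith
  rw [intervalIntegral.integrableOn_Ioo_rpow_iff hr] at hinv_sq
  norm_num at hinv_sq

/-- Divergence of the full partition function of quantum U(1)-Yang-Mills theory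
on `ℤ₂ × ℤ₂`: with `A(a,b) = (1−a²)(1−b²)`, the integrand
`A/((1−A²)^{3/2}√((2−a²)(2−b²)))` is not Lebesgue integrable on `(0,1)²`. -/
theorem stmt_7 :
    ¬ IntegrableOn
        (fun p : ℝ × ℝ =>
          (1 - p.1^2) * (1 - p.2^2) /
            ((1 - ((1 - p.1^2) * (1 - p.2^2))^2) ^ ((3:ℝ)/2) *
              Real.sqrt ((2 - p.1^2) * (2 - p.2^2))))
        ((Set.Ioo (0:ℝ) 1) ×ˢ (Set.Ioo (0:ℝ) 1)) := by
  change ¬ IntegrableOn (fun p : ℝ × ℝ => partitionDensity p.1 p.2) _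
  intro h
  have hsmall :
      IntegrableOn (fun p => partitionDensity p.1 p.2) (Ioo 0 (1 / 2) ×ˢ Ioo 0 (1 / 2)) :=
    h.mono_set (prod_mono (Ioo_subset_Ioo_right (by norm_num)) (Ioo_subset_Ioo_right (by norm_num)))
  refine not_integrableOn_inv_add_pow_three (by norm_num : (0 : ℝ) < 1 / 2)
    ((hsmall.const_mul 12).mono' (by fun_prop) ?_)
  refine ae_restrict_of_forall_mem (measurableSet_Ioo.prod measurableSet_Ioo) fun p hp => ?_
  have hpos : 0 < p.1 + p.2 := add_pos hp.1.1 hp.2.1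
  have hbound := inv_twelve_mul_add_pow_three_le_partitionDensity hp.1 hp.2
  rw [mul_inv] at hbound
  rw [norm_of_nonneg (by positivity)]
  linarith
end

section
/- Let n ≥ 1 and G = (ℤ/2ℤ)ⁿ, with the complex Ωᵏ = {functions G → Λᵏ(ℂⁿ)} and differential (dω)(x) = Σ_a e_a ∧ (∂ᵃω)(x). For every k with 0 ≤ k ≤ n, the k-th cohomology ker(d : Ωᵏ → Ω^{k+1}) / im(d : Ω^{k−1} → Ωᵏ) has ℂ-dimension binomial(n, k), and it is represented by the constant forms, i.e. the constant functions with values in Λᵏ(ℂⁿ). -/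
/-!
Write `d = ∑ₐ εₐ ∂ᵃ`, where `εₐ` is left multiplication by `eₐ`, and let `ιₐ` be contraction
with the `a`-th coordinate functional. The `∂ᵃ` commute with the `ε_b`, the `ι_b` and each other,
`ιₐ ε_b + ε_b ιₐ = δₐ_b` and `(∂ᵃ)² = -2 ∂ᵃ`, so `hₐ = ¼ ιₐ ∂ᵃ` satisfies
`d hₐ + hₐ d = -½ ∂ᵃ = 1 - Aₐ`, where `Aₐ = 1 + ½ ∂ᵃ` averages in the direction `a`.
Since `d` commutes with every `Aₐ`, these homotopies compose to `d H + H d = 1 - P` with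
`P = A₁ ⋯ Aₙ`, and `P ω` is a constant form because `∂ᵃ Aₐ = 0`. Hence a closed `k`-form `ω`
differs from the constant form `P ω` by an exact form; and `P` fixes constant forms while
`P d = d P = 0`, so no nonzero constant form is exact. Thus `Hᵏ ≅ Λᵏ(ℂⁿ)`, of dimension
`binomial(n, k)`.
-/

open Finset

/-- Differential forms on the lattice `(ℤ₂)ⁿ`: functions with values in the
exterior algebra `Λ(ℂⁿ)`. -/
abbrev FormSpace (n : ℕ) := (Fin n → ZMod 2) → ExteriorAlgebra ℂ (Fin n → ℂ)

/-- The exterior differential `(dω)(x) = Σ_a e_a ∧ (∂ᵃω)(x)` as a linear map,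
where `(∂ᵃω)(x) = ω(x + e_a) − ω(x)`. -/
noncomputable def dL (n : ℕ) : FormSpace n →ₗ[ℂ] FormSpace n where
  toFun ω := fun x =>
    ∑ a, ExteriorAlgebra.ι ℂ (Pi.single a (1:ℂ)) * (ω (x + Pi.single a 1) - ω x)
  map_add' ω η := by
    funext x
    simp only [Pi.add_apply]
    rw [← Finset.sum_add_distrib]
    refine Finset.sum_congr rfl fun a _ => ?_
    rw [← mul_add]
    congr 1
    abel
  map_smul' c ω := by
    funext x
    simp only [Pi.smul_apply, RingHom.id_apply]
    rw [Finset.smul_sum]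
    refine Finset.sum_congr rfl fun a _ => ?_
    rw [← smul_sub, mul_smul_comm]

/-- The grade-`k` part `Λᵏ(ℂⁿ)` of the exterior algebra, as a submodule. -/
noncomputable def gradePart (n k : ℕ) : Submodule ℂ (ExteriorAlgebra ℂ (Fin n → ℂ)) :=
  (LinearMap.range (ExteriorAlgebra.ι ℂ :
      (Fin n → ℂ) →ₗ[ℂ] ExteriorAlgebra ℂ (Fin n → ℂ))) ^ k

/-- `Ωᵏ`: the `Λᵏ(ℂⁿ)`-valued functions on `(ℤ₂)ⁿ`, as a submodule. -/
noncomputable def OmegaK (n k : ℕ) : Submodule ℂ (FormSpace n) :=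
  Submodule.pi Set.univ (fun _ => gradePart n k)

/-- The closed `k`-forms. -/
noncomputable def Zk (n k : ℕ) : Submodule ℂ (FormSpace n) :=
  OmegaK n k ⊓ LinearMap.ker (dL n)

/-- The exact `k`-forms (`⊥` in degree 0). -/
noncomputable def Bk (n k : ℕ) : Submodule ℂ (FormSpace n) :=
  if k = 0 then ⊥ else Submodule.map (dL n) (OmegaK n (k - 1))

section Homotopy

variable {R ι : Type*}

theorem koszul_anticommutator [Semiring R] [Fintype ι] [DecidableEq ι] (ε c Δ : ι → R)
    (hεΔ : ∀ a b, Commute (Δ a) (ε b)) (hcΔ : ∀ a b, Commute (Δ a) (c b))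
    (hΔ : ∀ a b, Commute (Δ a) (Δ b))
    (hcε : ∀ a b, c a * ε b + ε b * c a = if a = b then 1 else 0) (a : ι) :
    (∑ b, ε b * Δ b) * (c a * Δ a) + c a * Δ a * ∑ b, ε b * Δ b = Δ a * Δ a := by
  have term : ∀ b, ε b * Δ b * (c a * Δ a) + c a * Δ a * (ε b * Δ b)
      = (if a = b then 1 else 0) * (Δ a * Δ b) := by
    intro b
    have h₁ : ε b * Δ b * (c a * Δ a) = ε b * c a * (Δ a * Δ b) := by
      simp only [mul_assoc]
      rw [← mul_assoc (Δ b), (hcΔ b a).eq, mul_assoc, (hΔ b a).eq]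
    have h₂ : c a * Δ a * (ε b * Δ b) = c a * ε b * (Δ a * Δ b) := by
      simp only [mul_assoc]
      rw [← mul_assoc (Δ a), (hεΔ a b).eq, mul_assoc]
    rw [h₁, h₂, ← hcε, add_mul, add_comm]
  simp_rw [sum_mul, mul_sum, ← sum_add_distrib, term, ite_mul, one_mul, zero_mul,
    sum_ite_eq, mem_univ, if_true]

def telescopeHomotopy [Semiring R] (A h : ι → R) : List ι → R
  | [] => 0
  | a :: l => h a + A a * telescopeHomotopy A h l

theorem homotopy_list_prod [Ring R] (d : R) (A h : ι → R) (hA : ∀ a, Commute d (A a))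
    (hh : ∀ a, d * h a + h a * d = 1 - A a) (l : List ι) :
    d * telescopeHomotopy A h l + telescopeHomotopy A h l * d = 1 - (l.map A).prod := by
  induction l with
  | nil => simp [telescopeHomotopy]
  | cons a l ih =>
    calc d * (h a + A a * telescopeHomotopy A h l) + (h a + A a * telescopeHomotopy A h l) * d
        = (d * h a + h a * d) + A a * (d * telescopeHomotopy A h l
            + telescopeHomotopy A h l * d) := by
          rw [mul_add, add_mul, ← mul_assoc, (hA a).eq]; noncomm_ring
      _ = 1 - ((a :: l).map A).prod := by
          rw [hh, ih, List.map_cons, List.prod_cons]; noncomm_ring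

theorem mul_list_prod_eq_zero [Semiring R] {x : R} {A : ι → R} (hcomm : ∀ b, Commute x (A b)) {a : ι}
    (ha : x * A a = 0) {l : List ι} (hl : a ∈ l) : x * (l.map A).prod = 0 := by
  induction l with
  | nil => cases hl
  | cons b l ih =>
    rw [List.map_cons, List.prod_cons, ← mul_assoc]
    rcases List.mem_cons.1 hl with rfl | hl
    · rw [ha, zero_mul]
    · rw [(hcomm b).eq, mul_assoc, ih hl, mul_zero]

end Homotopy

theorem Submodule.le_comap_telescopeHomotopy {K V ι : Type*} [Semiring K] [AddCommMonoid V]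
    [Module K V] {p q : Submodule K V} (A h : ι → Module.End K V)
    (hA : ∀ a, q ∈ (A a).invtSubmodule) (hh : ∀ a, p ≤ q.comap (h a)) (l : List ι) :
    p ≤ q.comap (telescopeHomotopy A h l) := by
  induction l with
  | nil => simp [telescopeHomotopy]
  | cons a l ih =>
    intro x hx
    show h a x + A a (telescopeHomotopy A h l x) ∈ q
    exact add_mem (hh a hx) (hA a (ih hx))

namespace CliffordAlgebra

variable {R M : Type*} [CommRing R] [AddCommGroup M] [Module R M]

theorem contractLeft_eq_zero_of_mem_exteriorPower_zero (d : Module.Dual R M)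
    {x : ExteriorAlgebra R M} (hx : x ∈ ⋀[R]^0 M) : contractLeft d x = 0 := by
  obtain ⟨r, rfl⟩ := Submodule.mem_one.1 (by simpa using hx)
  exact contractLeft_algebraMap _ d r

theorem contractLeft_mem_exteriorPower (d : Module.Dual R M) :
    ∀ {k : ℕ} {x : ExteriorAlgebra R M}, x ∈ ⋀[R]^(k + 1) M → contractLeft d x ∈ ⋀[R]^k M
  | k, x, hx => by
    rw [ExteriorAlgebra.exteriorPower, pow_succ'] at hx
    induction hx using Submodule.mul_induction_on' with
    | mem_mul_mem m hm y hy =>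
      obtain ⟨u, rfl⟩ := hm
      rw [contractLeft_ι_mul]
      refine sub_mem (Submodule.smul_mem _ _ hy) ?_
      match k, hy with
      | 0, hy =>
        rw [contractLeft_eq_zero_of_mem_exteriorPower_zero d hy, mul_zero]
        exact zero_mem _
      | k + 1, hy =>
        rw [ExteriorAlgebra.exteriorPower, pow_succ']
        exact Submodule.mul_mem_mul (LinearMap.mem_range_self _ u)
          (contractLeft_mem_exteriorPower d hy)
    | add x _ y _ hx hy => rw [map_add]; exact add_mem hx hy

end CliffordAlgebra

theorem apply_eq_apply_zero_of_add_single_one {ι β : Type*} [Finite ι] [DecidableEq ι]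
    {g : (ι → ZMod 2) → β} (hg : ∀ i x, g (x + Pi.single i 1) = g x) (x : ι → ZMod 2) :
    g x = g 0 := by
  suffices ∀ y x, g (x + y) = g x by simpa using this x 0
  intro y
  induction y using Pi.single_induction with
  | zero => simp
  | add y z hy hz => intro x; rw [← add_assoc, hz, hy]
  | single i c =>
    intro x
    rcases (by decide : ∀ c : ZMod 2, c = 0 ∨ c = 1) c with rfl | rfl
    · simp
    · exact hg i x

noncomputable section

namespace FormSpace

variable {n : ℕ}

def shift (v : Fin n → ZMod 2) : Module.End ℂ (FormSpace n) :=
  LinearMap.funLeft ℂ _ (· + v)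

def partialDiff (a : Fin n) : Module.End ℂ (FormSpace n) :=
  shift (Pi.single a 1) - 1

def wedge (a : Fin n) : Module.End ℂ (FormSpace n) :=
  (LinearMap.mulLeft ℂ (ExteriorAlgebra.ι ℂ (Pi.single a 1 : Fin n → ℂ))).compLeft _

def contract (a : Fin n) : Module.End ℂ (FormSpace n) :=
  (CliffordAlgebra.contractLeft (LinearMap.proj a : (Fin n → ℂ) →ₗ[ℂ] ℂ)).compLeft _

@[simp] theorem shift_apply (v : Fin n → ZMod 2) (ω : FormSpace n) (x : Fin n → ZMod 2) :
    shift v ω x = ω (x + v) := rfl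

theorem shift_mul_shift (v w : Fin n → ZMod 2) : shift v * shift w = shift (v + w) :=
  LinearMap.ext fun ω => funext fun x => by simp [add_assoc]

theorem commute_shift_compLeft (v : Fin n → ZMod 2)
    (T : Module.End ℂ (ExteriorAlgebra ℂ (Fin n → ℂ))) :
    Commute (shift v) (T.compLeft _) := rfl

theorem commute_partialDiff_compLeft (a : Fin n)
    (T : Module.End ℂ (ExteriorAlgebra ℂ (Fin n → ℂ))) :
    Commute (partialDiff a) (T.compLeft _) :=
  (commute_shift_compLeft _ T).sub_left (Commute.one_left _)

theorem commute_partialDiff (a b : Fin n) : Commute (partialDiff a) (partialDiff b) := by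
  have : Commute (shift (Pi.single a 1)) (shift (Pi.single b 1 : Fin n → ZMod 2)) := by
    rw [Commute, SemiconjBy, shift_mul_shift, shift_mul_shift, add_comm]
  exact (this.sub_right (Commute.one_right _)).sub_left (Commute.one_left _)

theorem partialDiff_mul_self (a : Fin n) :
    partialDiff a * partialDiff a = (-2 : ℂ) • partialDiff a := by
  have hsq : shift (Pi.single a 1) * shift (Pi.single a 1 : Fin n → ZMod 2) = 1 := by
    rw [shift_mul_shift, ← Pi.single_add, show (1 : ZMod 2) + 1 = 0 from rfl, Pi.single_zero]
    exact LinearMap.ext fun ω => funext fun x => by simp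
  rw [partialDiff, sub_mul, mul_sub, mul_sub, hsq]
  module

theorem contract_mul_wedge_add (a b : Fin n) :
    contract a * wedge b + wedge b * contract a = if a = b then 1 else 0 := by
  refine LinearMap.ext fun ω => funext fun x => ?_
  change CliffordAlgebra.contractLeft _ (ExteriorAlgebra.ι ℂ _ * ω x)
    + ExteriorAlgebra.ι ℂ _ * CliffordAlgebra.contractLeft _ (ω x) = _
  rw [CliffordAlgebra.contractLeft_ι_mul, sub_add_cancel]
  split_ifs with h <;> simp [h]

theorem dL_eq_sum : dL n = ∑ a, wedge a * partialDiff a := by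
  refine LinearMap.ext fun ω => funext fun x => ?_
  simp [dL, wedge, partialDiff, mul_sub]

def average (a : Fin n) : Module.End ℂ (FormSpace n) :=
  1 + (2⁻¹ : ℂ) • partialDiff a

def homotopyStep (a : Fin n) : Module.End ℂ (FormSpace n) :=
  (4⁻¹ : ℂ) • (contract a * partialDiff a)

theorem dL_mul_homotopyStep_add (a : Fin n) :
    dL n * homotopyStep a + homotopyStep a * dL n = 1 - average a := by
  have koszul := koszul_anticommutator wedge contract partialDiff
    (fun a b => commute_partialDiff_compLeft a _) (fun a b => commute_partialDiff_compLeft a _)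
    commute_partialDiff contract_mul_wedge_add a
  rw [homotopyStep, mul_smul_comm, smul_mul_assoc, ← smul_add, dL_eq_sum, koszul,
    partialDiff_mul_self, average, smul_smul]
  module

theorem commute_dL_average (a : Fin n) : Commute (dL n) (average a) := by
  refine (Commute.one_right _).add_right (Commute.smul_right ?_ _)
  rw [dL_eq_sum]
  exact Commute.sum_left _ _ _ fun b _ =>
    (commute_partialDiff_compLeft a _).symm.mul_left (commute_partialDiff b a)

theorem partialDiff_mul_average_self (a : Fin n) : partialDiff a * average a = 0 := by
  rw [average, mul_add, mul_one, mul_smul_comm, partialDiff_mul_self, smul_smul]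
  module

variable (n) in
def averageAll : Module.End ℂ (FormSpace n) :=
  ((List.finRange n).map average).prod

variable (n) in
def homotopy : Module.End ℂ (FormSpace n) :=
  telescopeHomotopy average homotopyStep (List.finRange n)

theorem dL_mul_homotopy_add : dL n * homotopy n + homotopy n * dL n = 1 - averageAll n :=
  homotopy_list_prod _ _ _ commute_dL_average dL_mul_homotopyStep_add _

theorem partialDiff_mul_averageAll (a : Fin n) : partialDiff a * averageAll n = 0 :=
  mul_list_prod_eq_zero
    (fun b => (Commute.one_right _).add_right ((commute_partialDiff a b).smul_right _))
    (partialDiff_mul_average_self a)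
    (List.mem_finRange a)

theorem dL_mul_averageAll : dL n * averageAll n = 0 := by
  rw [dL_eq_sum, sum_mul]
  exact sum_eq_zero fun a _ => by rw [mul_assoc, partialDiff_mul_averageAll, mul_zero]

theorem averageAll_mul_dL : averageAll n * dL n = 0 := by
  have : Commute (dL n) (averageAll n) := Commute.list_prod_right _ _ fun A hA => by
    obtain ⟨a, -, rfl⟩ := List.mem_map.1 hA
    exact commute_dL_average a
  rw [← this.eq, dL_mul_averageAll]

theorem averageAll_const (v : ExteriorAlgebra ℂ (Fin n → ℂ)) :
    averageAll n (fun _ => v) = fun _ => v := by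
  have fixed : ∀ a : Fin n, average a (fun _ => v) = fun _ => v := fun a =>
    funext fun x => by simp [average, partialDiff]
  rw [averageAll]
  induction List.finRange n with
  | nil => rfl
  | cons a l ih => rw [List.map_cons, List.prod_cons, Module.End.mul_apply, ih, fixed]

theorem averageAll_eq_const (ω : FormSpace n) :
    averageAll n ω = fun _ => averageAll n ω 0 :=
  funext <| apply_eq_apply_zero_of_add_single_one fun a x =>
    sub_eq_zero.1 (congrFun (LinearMap.congr_fun (partialDiff_mul_averageAll a) ω) x)

theorem mem_OmegaK {k : ℕ} {ω : FormSpace n} : ω ∈ OmegaK n k ↔ ∀ x, ω x ∈ gradePart n k := by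
  simp [OmegaK, Submodule.mem_pi]

theorem OmegaK_mem_invtSubmodule_partialDiff (k : ℕ) (a : Fin n) :
    OmegaK n k ∈ (partialDiff a).invtSubmodule := fun _ hω =>
  mem_OmegaK.2 fun x => sub_mem (mem_OmegaK.1 hω _) (mem_OmegaK.1 hω x)

theorem OmegaK_mem_invtSubmodule_average (k : ℕ) (a : Fin n) :
    OmegaK n k ∈ (average a).invtSubmodule := fun _ hω =>
  add_mem hω (Submodule.smul_mem _ _ (OmegaK_mem_invtSubmodule_partialDiff k a hω))

theorem OmegaK_mem_invtSubmodule_averageAll (k : ℕ) :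
    OmegaK n k ∈ (averageAll n).invtSubmodule := by
  rw [averageAll]
  induction List.finRange n with
  | nil => simp
  | cons a l ih => exact Module.End.invtSubmodule.comp _ (OmegaK_mem_invtSubmodule_average k a) ih

theorem contract_mem_OmegaK {k : ℕ} (a : Fin n) {ω : FormSpace n} (hω : ω ∈ OmegaK n (k + 1)) :
    contract a ω ∈ OmegaK n k :=
  mem_OmegaK.2 fun x => CliffordAlgebra.contractLeft_mem_exteriorPower _ (mem_OmegaK.1 hω x)

theorem contract_eq_zero {a : Fin n} {ω : FormSpace n} (hω : ω ∈ OmegaK n 0) :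
    contract a ω = 0 :=
  funext fun x =>
    CliffordAlgebra.contractLeft_eq_zero_of_mem_exteriorPower_zero _ (mem_OmegaK.1 hω x)

theorem OmegaK_succ_le_comap_homotopy (k : ℕ) :
    OmegaK n (k + 1) ≤ (OmegaK n k).comap (homotopy n) :=
  Submodule.le_comap_telescopeHomotopy _ _ (OmegaK_mem_invtSubmodule_average k)
    (fun a _ hω => Submodule.smul_mem _ _
      (contract_mem_OmegaK a (OmegaK_mem_invtSubmodule_partialDiff _ a hω))) _

theorem OmegaK_zero_le_ker_homotopy : OmegaK n 0 ≤ LinearMap.ker (homotopy n) :=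
  Submodule.le_comap_telescopeHomotopy _ _ (fun a => Module.End.invtSubmodule.bot_mem _)
    (fun a _ hω => by
      rw [Submodule.mem_comap, homotopyStep, LinearMap.smul_apply, Module.End.mul_apply,
        contract_eq_zero (OmegaK_mem_invtSubmodule_partialDiff _ a hω), smul_zero]
      exact zero_mem _) _

theorem sub_averageAll_mem_Bk {k : ℕ} {ω : FormSpace n} (hω : ω ∈ Zk n k) :
    ω - averageAll n ω ∈ Bk n k := by
  obtain ⟨hωk, hclosed⟩ := hω
  have hexact : ω - averageAll n ω = dL n (homotopy n ω) := by
    have := LinearMap.congr_fun dL_mul_homotopy_add ω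
    simp only [LinearMap.add_apply, Module.End.mul_apply, LinearMap.mem_ker.1 hclosed, map_zero,
      add_zero, LinearMap.sub_apply, Module.End.one_apply] at this
    exact this.symm
  rw [hexact]
  cases k with
  | zero => rw [OmegaK_zero_le_ker_homotopy hωk, map_zero]; exact zero_mem _
  | succ k =>
    rw [Bk, if_neg k.succ_ne_zero]
    exact Submodule.mem_map_of_mem (OmegaK_succ_le_comap_homotopy k hωk)

theorem eq_zero_of_const_mem_Bk {k : ℕ} {v : ExteriorAlgebra ℂ (Fin n → ℂ)}
    (h : (fun _ => v) ∈ Bk n k) : v = 0 := by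
  have hrange : Bk n k ≤ LinearMap.range (dL n) := by
    unfold Bk
    split_ifs
    exacts [bot_le, LinearMap.map_le_range]
  obtain ⟨η, hη⟩ := hrange h
  have : (fun _ => v : FormSpace n) = 0 := by
    rw [← averageAll_const, ← hη, ← Module.End.mul_apply, averageAll_mul_dL, LinearMap.zero_apply]
  exact congrFun this 0

theorem exists_const_sub_mem_Bk {k : ℕ} {ω : FormSpace n} (hω : ω ∈ Zk n k) :
    ∃ v ∈ gradePart n k, ω - (fun _ => v) ∈ Bk n k :=
  ⟨averageAll n ω 0, mem_OmegaK.1 (OmegaK_mem_invtSubmodule_averageAll k hω.1) 0, by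
    rw [← averageAll_eq_const]; exact sub_averageAll_mem_Bk hω⟩

theorem const_mem_Zk {k : ℕ} {v : ExteriorAlgebra ℂ (Fin n → ℂ)} (hv : v ∈ gradePart n k) :
    (fun _ => v) ∈ Zk n k :=
  ⟨mem_OmegaK.2 fun _ => hv, funext fun x => by simp [dL]⟩

variable (n) in
def constClass (k : ℕ) :
    gradePart n k →ₗ[ℂ] ↥(Zk n k) ⧸ Submodule.comap (Zk n k).subtype (Bk n k) :=
  (Submodule.mkQ _) ∘ₗ LinearMap.codRestrict (Zk n k)
    ((LinearMap.pi fun _ => LinearMap.id) ∘ₗ (gradePart n k).subtype) fun v => const_mem_Zk v.2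

theorem constClass_bijective (k : ℕ) : Function.Bijective (constClass n k) := by
  refine ⟨(injective_iff_map_eq_zero _).2 fun v hv => Subtype.ext ?_, fun c => ?_⟩
  · refine eq_zero_of_const_mem_Bk (k := k) ?_
    rwa [constClass, LinearMap.comp_apply, Submodule.mkQ_apply, Submodule.Quotient.mk_eq_zero,
      Submodule.mem_comap] at hv
  · obtain ⟨⟨ω, hω⟩, rfl⟩ := Submodule.mkQ_surjective _ c
    obtain ⟨v, hv, hωv⟩ := exists_const_sub_mem_Bk hω
    refine ⟨⟨v, hv⟩, (Submodule.Quotient.eq _).2 ?_⟩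
    show (fun _ => v) - ω ∈ Bk n k
    simpa using neg_mem hωv

end FormSpace

end

theorem stmt_12_general (n k : ℕ) :
    Module.finrank ℂ (↥(Zk n k) ⧸ Submodule.comap (Zk n k).subtype (Bk n k))
        = n.choose k
    ∧ ∀ ω ∈ Zk n k, ∃ v ∈ gradePart n k, ω - (fun _ => v) ∈ Bk n k := by
  refine ⟨?_, fun ω hω => FormSpace.exists_const_sub_mem_Bk hω⟩
  rw [← (LinearEquiv.ofBijective _ (FormSpace.constClass_bijective k)).finrank_eq]
  exact (exteriorPower.finrank_eq (M := Fin n → ℂ) ℂ k).trans (by rw [Module.finrank_fin_fun])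

/-- The `k`-th noncommutative de Rham cohomology of `(ℤ₂)ⁿ`, for `0 ≤ k ≤ n`,
has dimension `binomial(n,k)` and is represented by the constant
`Λᵏ(ℂⁿ)`-valued forms. -/
theorem stmt_12 (n k : ℕ) (hn : 1 ≤ n) (hk : k ≤ n) :
    Module.finrank ℂ (↥(Zk n k) ⧸ Submodule.comap (Zk n k).subtype (Bk n k))
        = n.choose k
    ∧ ∀ ω ∈ Zk n k, ∃ v ∈ gradePart n k, ω - (fun _ => v) ∈ Bk n k :=
  stmt_12_general n k
end

section
/- Let n ≥ 1 and let Q be the quadratic form Q(x) = Σ_{i=1}^n x_i² on ℂⁿ, with Clifford algebra Cliff(n) = CliffordAlgebra(Q) and generators γ_a = ι(e_a), so that γ_a γ_b + γ_b γ_a = 2δ_{ab}. For k ∈ (ℤ/2ℤ)ⁿ with integer representatives k_a ∈ {0,1}, set γ_k = γ₁^{k₁}·γ₂^{k₂}⋯γ_n^{k_n}. Then {γ_k : k ∈ (ℤ/2ℤ)ⁿ} is a ℂ-basis of Cliff(n), and for all k, m ∈ (ℤ/2ℤ)ⁿ one has γ_k·γ_m = (−1)^{Σ_{j<i} k_i m_j}·γ_{k+m},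 where k + m is componentwise addition in (ℤ/2ℤ)ⁿ. -/
open Finset

/-- The quadratic form `Q(x) = Σ_{i=1}^n x_i²` on `ℂⁿ`. -/
noncomputable def Qn (n : ℕ) : QuadraticForm ℂ (Fin n → ℂ) :=
  QuadraticMap.weightedSumSquares ℂ (fun _ : Fin n => (1 : ℂ))

/-- The generators `γ_a = ι(e_a)` of the Clifford algebra `Cliff(n)`. -/
noncomputable def gam (n : ℕ) (a : Fin n) : CliffordAlgebra (Qn n) :=
  CliffordAlgebra.ι (Qn n) (Pi.single a 1)

/-- The ordered monomials `γ_k = γ₁^{k₁}γ₂^{k₂}⋯γ_n^{k_n}` for `k ∈ (ℤ₂)ⁿ`. -/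
noncomputable def gamK (n : ℕ) (k : Fin n → ZMod 2) : CliffordAlgebra (Qn n) :=
  ((List.finRange n).map (fun a => gam n a ^ (k a).val)).prod

/-!
Anticommuting involutions `g₁, …, gₙ` in any algebra multiply their ordered monomials by
`γ_k γ_m = (-1)^{Σ_{j<i} k_i m_j} γ_{k+m}`: moving `g₁^{m₁}` to the left past the tail of `γ_k`
costs `(-1)^{m₁ (k₂ + ⋯ + kₙ)}`, and induction on `n` does the rest. So the span of the `γ_k`
is a subalgebra; it contains the generators, hence is all of `Cliff(n)`. For independence,
the Jordan–Wigner operators `σ_z ⊗ ⋯ ⊗ σ_z ⊗ σ_x ⊗ 1 ⊗ ⋯ ⊗ 1`, acting on functions on `(ℤ₂)ⁿ`,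
satisfy the Clifford relations, and the resulting representation sends `γ_k` to an operator
mapping `δ₀` to `δ_k`.
-/

theorem neg_one_pow_val_add {R : Type*} [Ring R] (x y : ZMod 2) :
    (-1 : R) ^ (x + y).val = (-1) ^ x.val * (-1) ^ y.val := by
  rw [ZMod.val_add, ← neg_one_pow_eq_pow_mod_two, pow_add]

section Monomial

variable {R A : Type*} [CommRing R] [Ring A] [Algebra R A] {n : ℕ}

def orderedMonomial (g : Fin n → A) (k : Fin n → ZMod 2) : A :=
  ((List.finRange n).map (fun a => g a ^ (k a).val)).prod

def cocycleExponent (k m : Fin n → ZMod 2) : ℕ :=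
  ∑ i, ∑ j ∈ univ.filter (fun j => j < i), (k i).val * (m j).val

theorem orderedMonomial_zero (g : Fin n → A) : orderedMonomial g 0 = 1 := by
  simp [orderedMonomial]

theorem orderedMonomial_succ (g : Fin (n + 1) → A) (k : Fin (n + 1) → ZMod 2) :
    orderedMonomial g k = g 0 ^ (k 0).val * orderedMonomial (Fin.tail g) (Fin.tail k) := by
  simp [orderedMonomial, List.finRange_succ, Fin.tail, Function.comp_def]

theorem cocycleExponent_succ (k m : Fin (n + 1) → ZMod 2) :
    cocycleExponent k m
      = (∑ i, (Fin.tail k i).val) * (m 0).val + cocycleExponent (Fin.tail k) (Fin.tail m) := by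
  simp only [cocycleExponent, Finset.sum_filter, Fin.sum_univ_succ, Fin.succ_lt_succ_iff,
    Fin.not_lt_zero, Fin.succ_pos, if_true, if_false, Finset.sum_const_zero, zero_add,
    Finset.sum_mul, Finset.sum_add_distrib, Fin.tail]

theorem pow_val_mul_pow_val {x : A} (hx : x * x = 1) (a b : ZMod 2) :
    x ^ a.val * x ^ b.val = x ^ (a + b).val := by
  rw [← pow_add, ZMod.val_add, ← pow_eq_pow_mod _ (by rw [sq, hx])]

theorem orderedMonomial_mul_of_anticomm {g : Fin n → A} {x : A}
    (hx : ∀ i, g i * x = -(x * g i)) (k : Fin n → ZMod 2) :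
    orderedMonomial g k * x = ((-1 : R) ^ ∑ i, (k i).val) • (x * orderedMonomial g k) := by
  induction n with
  | zero => simp [orderedMonomial]
  | succ n ih =>
    have hpow : ∀ e : ℕ, g 0 ^ e * x = ((-1 : R) ^ e) • (x * g 0 ^ e) := by
      intro e
      induction e with
      | zero => simp
      | succ e ihe =>
        rw [pow_succ, mul_assoc, hx, mul_neg, ← mul_assoc, ihe]
        simp [pow_succ, mul_assoc]
    rw [orderedMonomial_succ, mul_assoc, ih (g := Fin.tail g) (fun i => hx i.succ),
      mul_smul_comm, ← mul_assoc, hpow, smul_mul_assoc, smul_smul, ← pow_add, Fin.sum_univ_succ,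
      mul_assoc, add_comm]
    rfl

theorem orderedMonomial_mul_pow_of_anticomm {g : Fin n → A} {x : A}
    (hx : ∀ i, g i * x = -(x * g i)) (k : Fin n → ZMod 2) (e : ℕ) :
    orderedMonomial g k * x ^ e
      = ((-1 : R) ^ ((∑ i, (k i).val) * e)) • (x ^ e * orderedMonomial g k) := by
  have h : SemiconjBy (orderedMonomial g k) x (((-1 : R) ^ ∑ i, (k i).val) • x) := by
    rw [SemiconjBy, orderedMonomial_mul_of_anticomm (R := R) hx, smul_mul_assoc]
  rw [(h.pow_right e).eq, smul_pow, pow_mul, smul_mul_assoc]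

theorem orderedMonomial_mul_orderedMonomial {g : Fin n → A} (hsq : ∀ i, g i * g i = 1)
    (hanti : ∀ i j, i ≠ j → g i * g j = -(g j * g i)) (k m : Fin n → ZMod 2) :
    orderedMonomial g k * orderedMonomial g m
      = ((-1 : R) ^ cocycleExponent k m) • orderedMonomial g (k + m) := by
  induction n with
  | zero => simp [orderedMonomial, cocycleExponent]
  | succ n ih =>
    have htail := ih (g := Fin.tail g) (fun i => hsq i.succ)
      (fun i j hij => hanti _ _ (Fin.succ_injective _ |>.ne hij)) (Fin.tail k) (Fin.tail m)
    have hswap := orderedMonomial_mul_pow_of_anticomm (R := R) (g := Fin.tail g) (x := g 0)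
      (fun i => hanti _ _ (Fin.succ_ne_zero i)) (Fin.tail k) (m 0).val
    rw [orderedMonomial_succ, orderedMonomial_succ g m, orderedMonomial_succ g (k + m),
      cocycleExponent_succ, mul_assoc, ← mul_assoc (orderedMonomial _ _), hswap]
    simp only [smul_mul_assoc, mul_smul_comm, ← mul_assoc]
    rw [pow_val_mul_pow_val (hsq 0), mul_assoc, htail, mul_smul_comm, smul_smul, ← pow_add]
    rfl

theorem orderedMonomial_single (g : Fin n → A) (a : Fin n) :
    orderedMonomial g (Pi.single a 1) = g a := by
  induction n with
  | zero => exact a.elim0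
  | succ n ih =>
    rw [orderedMonomial_succ]
    cases a using Fin.cases with
    | zero =>
      have htail : Fin.tail (Pi.single 0 1 : Fin (n + 1) → ZMod 2) = 0 := by
        funext i; simp [Fin.tail, Fin.succ_ne_zero]
      simp [htail, orderedMonomial_zero, ZMod.val_one]
    | succ a =>
      have htail : Fin.tail (Pi.single a.succ 1 : Fin (n + 1) → ZMod 2) = Pi.single a 1 := by
        funext i; simp [Fin.tail, Pi.single_apply]
      simp [htail, ih, Fin.tail, (Fin.succ_ne_zero a).symm]

theorem cocycleExponent_single_left {a : Fin n} {m : Fin n → ZMod 2}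
    (hm : ∀ j < a, m j = 0) : cocycleExponent (Pi.single a 1) m = 0 := by
  refine Finset.sum_eq_zero fun i _ => Finset.sum_eq_zero fun j hj => ?_
  have hji : j < i := (Finset.mem_filter.1 hj).2
  rcases eq_or_ne i a with rfl | hia
  · simp [hm j hji]
  · simp [Pi.single_eq_of_ne hia]

theorem mul_orderedMonomial_of_forall_lt {g : Fin n → A} (hsq : ∀ i, g i * g i = 1)
    (hanti : ∀ i j, i ≠ j → g i * g j = -(g j * g i)) {a : Fin n} {m : Fin n → ZMod 2}
    (hm : ∀ j < a, m j = 0) :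
    g a * orderedMonomial g m = orderedMonomial g (Pi.single a 1 + m) := by
  rw [← orderedMonomial_single g a, orderedMonomial_mul_orderedMonomial (R := ℤ) hsq hanti,
    cocycleExponent_single_left hm, pow_zero, one_smul]

theorem sum_smul_mul_self_of_anticomm {ι : Type*} [Fintype ι] {c : ι → A}
    (hsq : ∀ i, c i * c i = 1) (hanti : ∀ i j, i ≠ j → c i * c j = -(c j * c i)) (v : ι → R) :
    (∑ i, v i • c i) * (∑ i, v i • c i) = algebraMap R A (∑ i, v i * v i) := by
  classical
  have hdiag : ∑ i, (v i * v i) • (1 : A) = ∑ i, ∑ j, if i = j then (v i * v j) • 1 else 0 := by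
    simp
  rw [Finset.sum_mul_sum, Algebra.algebraMap_eq_smul_one, Finset.sum_smul, hdiag, ← sub_eq_zero,
    ← Finset.sum_sub_distrib]
  simp_rw [← Finset.sum_sub_distrib, smul_mul_smul_comm]
  rw [← Finset.sum_product' (f := fun i j => (v i * v j) • (c i * c j)
    - if i = j then (v i * v j) • (1 : A) else 0)]
  refine Finset.sum_ninvolution Prod.swap (fun ⟨i, j⟩ => ?_) (fun ⟨i, j⟩ hne hswap => ?_)
    (fun _ => Finset.mem_univ _) Prod.swap_swap
  · rcases eq_or_ne i j with rfl | hij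
    · simp [hsq]
    · simp [hij, hij.symm, hanti i j hij, mul_comm (v j)]
  · obtain rfl : j = i := congrArg Prod.fst hswap
    simp [hsq] at hne

theorem mul_mem_span_range_orderedMonomial {g : Fin n → A} (hsq : ∀ i, g i * g i = 1)
    (hanti : ∀ i j, i ≠ j → g i * g j = -(g j * g i)) {x y : A}
    (hx : x ∈ Submodule.span R (Set.range (orderedMonomial g)))
    (hy : y ∈ Submodule.span R (Set.range (orderedMonomial g))) :
    x * y ∈ Submodule.span R (Set.range (orderedMonomial g)) := by
  refine (Submodule.span_mul_span R _ _).le.trans ?_ (Submodule.mul_mem_mul hx hy)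
  rw [Submodule.span_le]
  rintro _ ⟨_, ⟨k, rfl⟩, _, ⟨m, rfl⟩, rfl⟩
  dsimp only [SetLike.mem_coe]
  rw [orderedMonomial_mul_orderedMonomial (R := R) hsq hanti]
  exact Submodule.smul_mem _ _ (Submodule.subset_span ⟨k + m, rfl⟩)

end Monomial

section Clifford

variable {n : ℕ}

theorem gamK_eq_orderedMonomial : gamK n = orderedMonomial (gam n) := rfl

theorem Qn_apply (v : Fin n → ℂ) : Qn n v = ∑ i, v i * v i := by
  simp [Qn, QuadraticMap.weightedSumSquares_apply]

theorem Qn_single (a : Fin n) : Qn n (Pi.single a 1) = 1 := by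
  simp [Qn_apply, Pi.single_apply]

theorem gam_mul_self (a : Fin n) : gam n a * gam n a = 1 := by
  rw [gam, CliffordAlgebra.ι_sq_scalar, Qn_single, map_one]

theorem gam_anticomm {a b : Fin n} (h : a ≠ b) : gam n a * gam n b = -(gam n b * gam n a) := by
  have hortho : (Qn n).IsOrtho (Pi.single a 1) (Pi.single b 1) := by
    rw [QuadraticMap.isOrtho_def, Qn_apply, Qn_apply, Qn_apply]
    simp [Pi.single_apply, mul_add, Finset.sum_add_distrib, h, Ne.symm h]
  exact eq_neg_of_add_eq_zero_left (CliffordAlgebra.ι_mul_ι_add_swap_of_isOrtho hortho)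

theorem gam_mul_gam_add_swap (a b : Fin n) :
    gam n a * gam n b + gam n b * gam n a = if a = b then 2 else 0 := by
  split_ifs with h
  · rw [h, gam_mul_self, one_add_one_eq_two]
  · rw [gam_anticomm h, neg_add_cancel]

theorem ι_eq_sum_smul_gam (v : Fin n → ℂ) : CliffordAlgebra.ι (Qn n) v = ∑ a, v a • gam n a := by
  simp_rw [gam, ← map_smul, ← map_sum, ← pi_eq_sum_univ' v]

theorem span_range_gamK : Submodule.span ℂ (Set.range (gamK n)) = ⊤ := by
  let S : Subalgebra ℂ (CliffordAlgebra (Qn n)) :=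
    (Submodule.span ℂ (Set.range (gamK n))).toSubalgebra
      (Submodule.subset_span ⟨0, orderedMonomial_zero _⟩)
      (fun _ _ => mul_mem_span_range_orderedMonomial gam_mul_self (fun _ _ => gam_anticomm))
  have hι : Set.range (CliffordAlgebra.ι (Qn n)) ⊆ S := by
    rintro _ ⟨v, rfl⟩
    rw [ι_eq_sum_smul_gam]
    exact Submodule.sum_mem _ fun a _ =>
      Submodule.smul_mem _ _ (Submodule.subset_span ⟨Pi.single a 1, orderedMonomial_single _ a⟩)
  have htop := Algebra.adjoin_le hι
  rw [CliffordAlgebra.adjoin_range_ι] at htop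
  exact eq_top_iff.2 fun x _ => htop trivial

end Clifford

section JordanWigner

variable {n : ℕ}

def signBelow (a : Fin n) (k : Fin n → ZMod 2) : ℂ :=
  (-1) ^ (∑ j ∈ univ.filter (· < a), k j).val

theorem signBelow_mul_self (a : Fin n) (k : Fin n → ZMod 2) :
    signBelow a k * signBelow a k = 1 := by
  rw [signBelow, ← pow_add, Even.neg_one_pow ⟨_, rfl⟩]

theorem signBelow_add_single (a b : Fin n) (k : Fin n → ZMod 2) :
    signBelow a (k + Pi.single b 1) = (if b < a then -1 else 1) * signBelow a k := by
  simp only [signBelow, Pi.add_apply, Finset.sum_add_distrib, Finset.sum_pi_single',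
    Finset.mem_filter, Finset.mem_univ, true_and, neg_one_pow_val_add, mul_comm]
  split_ifs <;> simp [ZMod.val_one]

theorem signBelow_of_forall_lt {a : Fin n} {m : Fin n → ZMod 2} (hm : ∀ j < a, m j = 0) :
    signBelow a m = 1 := by
  rw [signBelow, Finset.sum_eq_zero fun j hj => hm j (Finset.mem_filter.1 hj).2, ZMod.val_zero,
    pow_zero]

def jordanWigner (a : Fin n) : Module.End ℂ ((Fin n → ZMod 2) → ℂ) where
  toFun f k := signBelow a k * f (k + Pi.single a 1)
  map_add' f g := by funext k; simp [mul_add]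
  map_smul' c f := by funext k; simp [mul_left_comm]

theorem jordanWigner_apply (a : Fin n) (f : (Fin n → ZMod 2) → ℂ) (k : Fin n → ZMod 2) :
    jordanWigner a f k = signBelow a k * f (k + Pi.single a 1) := rfl

theorem jordanWigner_mul_self (a : Fin n) : jordanWigner a * jordanWigner a = 1 := by
  refine LinearMap.ext fun f => funext fun k => ?_
  simp [jordanWigner_apply, signBelow_add_single, add_assoc, ZModModule.add_self,
    ← mul_assoc, signBelow_mul_self]

theorem jordanWigner_anticomm {a b : Fin n} (h : a ≠ b) :
    jordanWigner a * jordanWigner b = -(jordanWigner b * jordanWigner a) := by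
  refine LinearMap.ext fun f => funext fun k => ?_
  simp only [Module.End.mul_apply, LinearMap.neg_apply, Pi.neg_apply, jordanWigner_apply,
    signBelow_add_single, add_right_comm k (Pi.single a 1)]
  rcases h.lt_or_gt with hab | hba
  · simp [hab, hab.not_gt]; ring
  · simp [hba, hba.not_gt]; ring

theorem jordanWigner_single_of_forall_lt {a : Fin n} {m : Fin n → ZMod 2}
    (hm : ∀ j < a, m j = 0) :
    jordanWigner a (Pi.single m 1) = Pi.single (Pi.single a 1 + m) 1 := by
  funext k
  have hk : k + Pi.single a 1 = m ↔ k = Pi.single a 1 + m := by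
    rw [← eq_sub_iff_add_eq, ZModModule.sub_eq_add, add_comm]
  rw [jordanWigner_apply, Pi.single_apply, Pi.single_apply]
  by_cases h : k = Pi.single a 1 + m
  · rw [if_pos (hk.2 h), if_pos h, h, add_comm, signBelow_add_single, if_neg (lt_irrefl a),
      signBelow_of_forall_lt hm, mul_one, mul_one]
  · rw [if_neg (mt hk.1 h), if_neg h, mul_zero]

noncomputable def jordanWignerRep :
    CliffordAlgebra (Qn n) →ₐ[ℂ] Module.End ℂ ((Fin n → ZMod 2) → ℂ) :=
  CliffordAlgebra.lift (Qn n) ⟨Fintype.linearCombination ℂ jordanWigner, fun v => by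
    rw [Fintype.linearCombination_apply, Qn_apply,
      sum_smul_mul_self_of_anticomm jordanWigner_mul_self fun _ _ => jordanWigner_anticomm]⟩

theorem jordanWignerRep_gam (a : Fin n) : jordanWignerRep (gam n a) = jordanWigner a := by
  rw [jordanWignerRep, gam, CliffordAlgebra.lift_ι_apply, Fintype.linearCombination_apply_single,
    one_smul]

theorem jordanWignerRep_gamK (k : Fin n → ZMod 2) :
    jordanWignerRep (gamK n k) = orderedMonomial jordanWigner k := by
  simp [gamK_eq_orderedMonomial, orderedMonomial, map_list_prod, Function.comp_def,
    jordanWignerRep_gam]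

theorem orderedMonomial_jordanWigner_apply_single_zero (s : Finset (Fin n)) :
    orderedMonomial jordanWigner (fun i => if i ∈ s then 1 else 0) (Pi.single 0 1)
      = Pi.single (fun i => if i ∈ s then 1 else 0) 1 := by
  induction s using Finset.induction_on_min with
  | empty => simp [← Pi.zero_def, orderedMonomial_zero]
  | insert a s hmin ih =>
    have hlow : ∀ j < a, (fun i => if i ∈ s then (1 : ZMod 2) else 0) j = 0 := fun j hj =>
      if_neg fun hjs => (hmin j hjs).not_gt hj
    have hinsert : (fun i => if i ∈ insert a s then (1 : ZMod 2) else 0)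
        = Pi.single a 1 + fun i => if i ∈ s then 1 else 0 := by
      funext i
      have ha : a ∉ s := fun has => lt_irrefl a (hmin a has)
      by_cases hia : i = a <;> simp [hia, ha]
    rw [hinsert, ← mul_orderedMonomial_of_forall_lt jordanWigner_mul_self
      (fun _ _ => jordanWigner_anticomm) hlow, Module.End.mul_apply, ih,
      jordanWigner_single_of_forall_lt hlow]

theorem jordanWignerRep_gamK_apply_single_zero (k : Fin n → ZMod 2) :
    jordanWignerRep (gamK n k) (Pi.single 0 1) = Pi.single k 1 := by
  have hk : k = fun i => if i ∈ univ.filter (k · ≠ 0) then 1 else 0 := by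
    funext i
    simpa using (by decide : ∀ x : ZMod 2, x = if x ≠ 0 then 1 else 0) (k i)
  rw [jordanWignerRep_gamK, hk, orderedMonomial_jordanWigner_apply_single_zero]

theorem linearIndependent_gamK : LinearIndependent ℂ (gamK n) := by
  let T := LinearMap.applyₗ (Pi.single (0 : Fin n → ZMod 2) (1 : ℂ)) ∘ₗ
    (jordanWignerRep (n := n)).toLinearMap
  have hT : T ∘ gamK n = Pi.basisFun ℂ (Fin n → ZMod 2) := by
    funext k
    simp [T, jordanWignerRep_gamK_apply_single_zero]
  exact LinearIndependent.of_comp T (hT ▸ (Pi.basisFun ℂ _).linearIndependent)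

end JordanWigner

theorem stmt_17_general (n : ℕ) :
    (∀ a b : Fin n, gam n a * gam n b + gam n b * gam n a
        = if a = b then 2 else 0)
    ∧ LinearIndependent ℂ (gamK n)
    ∧ Submodule.span ℂ (Set.range (gamK n)) = ⊤
    ∧ (∀ k m : Fin n → ZMod 2,
        gamK n k * gamK n m
          = ((-1 : ℂ) ^ (∑ i, ∑ j ∈ Finset.univ.filter (fun j => j < i),
              (k i).val * (m j).val)) • gamK n (k + m)) :=
  ⟨gam_mul_gam_add_swap, linearIndependent_gamK, span_range_gamK,
    orderedMonomial_mul_orderedMonomial gam_mul_self fun _ _ => gam_anticomm⟩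

/-- `Cliff(n)` as a cocycle twist of the group algebra of `(ℤ₂)ⁿ`: the generators
satisfy `γ_aγ_b + γ_bγ_a = 2δ_{ab}`, the `γ_k` form a ℂ-basis, and
`γ_k γ_m = (−1)^{Σ_{j<i} k_i m_j} γ_{k+m}`. -/
theorem stmt_17 (n : ℕ) (hn : 1 ≤ n) :
    (∀ a b : Fin n, gam n a * gam n b + gam n b * gam n a
        = if a = b then 2 else 0)
    ∧ LinearIndependent ℂ (gamK n)
    ∧ Submodule.span ℂ (Set.range (gamK n)) = ⊤
    ∧ (∀ k m : Fin n → ZMod 2,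
        gamK n k * gamK n m
          = ((-1 : ℂ) ^ (∑ i, ∑ j ∈ Finset.univ.filter (fun j => j < i),
              (k i).val * (m j).val)) • gamK n (k + m)) :=
  stmt_17_general n
end
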